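/- arXiv:1504.05933 — 2 statements merged into one kernel-verified Lean document; each statement's English description precedes it below -/
import Mathlib

section
/- For nonnegative integers q and j with j ≤ q, the alternating sum H₁(q,j) = Σ_{p=0}^{q-j} (-1)^p (2q-p)! / (p! · (q-p+j+1)! · (q-p-j)!) equals (2q)! / ((q-j)! (q+j+1)!) · (j-q+1)_{q-j} / (-2q)_{q-j}, which vanishes for 0 ≤ j < q and equals 1/(2q+1) when j = q. Here (x)_n = x(x+1)···(x+n-1) is the rising factorial. -/
open Finset

lemma fwdDiff_iter_zero (h n : ℕ) : (fwdDiff h)^[n] (fun _ : ℕ ↦ (0:ℚ)) = fun _ ↦ 0 := by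
  induction n with
  | zero => rfl
  | succ n ih => rw [Function.iterate_succ_apply]; simpa [fwdDiff] using ih

lemma fwdDiff_prod (m : ℕ) (x : ℚ) :
    fwdDiff (1:ℕ) (fun k : ℕ ↦ ∏ i ∈ range (m+1), (x - k - i)) =
      (-(m+1) : ℚ) • fun k : ℕ ↦ ∏ i ∈ range m, (x - 1 - k - i) := by
  funext k
  simp only [fwdDiff, Pi.smul_apply, smul_eq_mul]
  have h1 : (∏ i ∈ range (m+1), (x - (k+1:ℕ) - i)) =
      (∏ i ∈ range m, (x - 1 - k - i)) * (x - 1 - k - m) := by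
    rw [prod_range_succ]
    congr 1
    · exact prod_congr rfl fun i _ => by push_cast; ring
    · push_cast; ring
  have h2 : (∏ i ∈ range (m+1), (x - k - i)) =
      (∏ i ∈ range m, (x - 1 - k - i)) * (x - k) := by
    rw [prod_range_succ']
    congr 1
    · exact prod_congr rfl fun i _ => by push_cast; ring
    · push_cast; ring
  rw [h1, h2]
  ring

lemma fwdDiff_iter_prod_eq_zero : ∀ (n m : ℕ) (x : ℚ), m < n →
    (fwdDiff (1:ℕ))^[n] (fun k : ℕ ↦ ∏ i ∈ range m, (x - k - i)) = fun _ ↦ 0 := by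
  intro n
  induction n with
  | zero => intro m x h; omega
  | succ n ih =>
    intro m x h
    match m with
    | 0 =>
      rw [Function.iterate_succ_apply]
      simp only [range_zero, prod_empty]
      rw [show fwdDiff (1:ℕ) (fun _ : ℕ ↦ (1:ℚ)) = fun _ ↦ 0 from fwdDiff_const 1 1]
      exact fwdDiff_iter_zero 1 n
    | m + 1 =>
      rw [Function.iterate_succ_apply, fwdDiff_prod, fwdDiff_iter_const_smul,
        ih m (x-1) (by omega)]
      funext k; simp

lemma prod_desc_mul (d a : ℕ) (h : d ≤ a) :
    (∏ i ∈ range d, ((a:ℚ) - i)) * (a - d).factorial = a.factorial := by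
  induction d with
  | zero => simp
  | succ d ih =>
    rw [prod_range_succ, mul_assoc]
    have hc : ((a:ℚ) - d) = ((a - d : ℕ) : ℚ) := by
      push_cast [Nat.cast_sub (by omega : d ≤ a)]; ring
    have hf : (a - d).factorial = (a - d) * (a - (d+1)).factorial := by
      rw [show a - d = (a - (d+1)) + 1 by omega, Nat.factorial_succ]
    rw [hc, show ((a-d:ℕ):ℚ) * ((a - (d+1)).factorial:ℚ) = ((a-d).factorial : ℚ) by
      rw [hf]; push_cast; ring]
    exact ih (by omega)

lemma prod_desc (d a : ℕ) (h : d ≤ a) :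
    ∏ i ∈ range d, ((a:ℚ) - i) = a.factorial / (a - d).factorial := by
  rw [eq_div_iff (Nat.cast_ne_zero.mpr (Nat.factorial_ne_zero _))]
  exact prod_desc_mul d a h

lemma H1_key (q j : ℕ) (hjq : j < q) :
    (∑ p ∈ Finset.range (q - j + 1),
        (-1 : ℚ) ^ p * (2 * q - p).factorial /
          (p.factorial * (q - p + j + 1).factorial * (q - p - j).factorial)) = 0 := by
  set n := q - j with hn
  have hn1 : 1 ≤ n := by omega
  have h0 := fwdDiff_iter_eq_sum_shift (1:ℕ)
      (fun k : ℕ ↦ ∏ i ∈ range (n-1), ((2*q:ℚ) - k - i)) n 0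
  rw [fwdDiff_iter_prod_eq_zero n (n-1) (2*q) (by omega)] at h0
  have hzero : (∑ k ∈ range (n+1),
      ((-1:ℚ) ^ (n-k) * (n.choose k)) * ∏ i ∈ range (n-1), ((2*q:ℚ) - k - i)) = 0 := by
    rw [show (0:ℚ) = (fun _ : ℕ ↦ (0:ℚ)) 0 from rfl, h0]
    refine sum_congr rfl fun k _ => ?_
    simp only [zsmul_eq_mul, smul_eq_mul, mul_one, zero_add]
    push_cast
    ring
  calc (∑ p ∈ Finset.range (q - j + 1),
        (-1 : ℚ) ^ p * (2 * q - p).factorial /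
          (p.factorial * (q - p + j + 1).factorial * (q - p - j).factorial))
      = ∑ p ∈ range (n+1), ((-1:ℚ)^n / n.factorial) *
          (((-1:ℚ)^(n-p) * (n.choose p)) * ∏ i ∈ range (n-1), ((2*q:ℚ) - p - i)) := by
        refine sum_congr rfl fun p hp => ?_
        have hpn : p ≤ n := by simpa [Nat.lt_succ_iff] using mem_range.mp hp
        have hprod : (∏ i ∈ range (n-1), ((2*q:ℚ) - p - i)) =
            ((2*q - p).factorial : ℚ) / ((q - p + j + 1).factorial : ℚ) := by
          rw [show (∏ i ∈ range (n-1), ((2*q:ℚ) - p - i)) =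
              ∏ i ∈ range (n-1), (((2*q - p : ℕ):ℚ) - i) from
            prod_congr rfl fun i _ => by
              push_cast [Nat.cast_sub (show p ≤ 2*q by omega)]; ring]
          rw [prod_desc (n-1) (2*q - p) (by omega),
            show 2*q - p - (n-1) = q - p + j + 1 from by omega]
        rw [hprod, Nat.cast_choose ℚ hpn,
          pow_sub₀ (-1:ℚ) (by norm_num) hpn,
          show n - p = q - p - j from by omega]
        have f1 : ((p.factorial : ℚ)) ≠ 0 := Nat.cast_ne_zero.mpr (Nat.factorial_ne_zero _)
        have f2 : (((q - p + j + 1).factorial : ℚ)) ≠ 0 := Nat.cast_ne_zero.mpr (Nat.factorial_ne_zero _)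
        have f3 : (((q - p - j).factorial : ℚ)) ≠ 0 := Nat.cast_ne_zero.mpr (Nat.factorial_ne_zero _)
        have f4 : ((n.factorial : ℚ)) ≠ 0 := Nat.cast_ne_zero.mpr (Nat.factorial_ne_zero _)
        have f5 : ((-1:ℚ)^p) ≠ 0 := by positivity
        field_simp
        ring_nf
        simp [pow_mul']
    _ = ((-1:ℚ)^n / n.factorial) * ∑ p ∈ range (n+1),
          (((-1:ℚ)^(n-p) * (n.choose p)) * ∏ i ∈ range (n-1), ((2*q:ℚ) - p - i)) := by
        rw [mul_sum]
    _ = 0 := by rw [hzero, mul_zero]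

/-- The rising factorial `(x)ₙ = x (x+1) ⋯ (x+n-1)` for a rational `x`. -/
def risingFactorial (x : ℚ) (n : ℕ) : ℚ := ∏ i ∈ Finset.range n, (x + i)

theorem H1_chu_vandermonde (q j : ℕ) (hjq : j ≤ q) :
    (∑ p ∈ Finset.range (q - j + 1),
        (-1 : ℚ) ^ p * (2 * q - p).factorial /
          (p.factorial * (q - p + j + 1).factorial * (q - p - j).factorial)) =
      ((2 * q).factorial / ((q - j).factorial * (q + j + 1).factorial)) *
        (risingFactorial ((j : ℚ) - q + 1) (q - j) /
          risingFactorial (-(2 * q : ℚ)) (q - j)) ∧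
    (j < q →
      (∑ p ∈ Finset.range (q - j + 1),
        (-1 : ℚ) ^ p * (2 * q - p).factorial /
          (p.factorial * (q - p + j + 1).factorial * (q - p - j).factorial)) = 0) ∧
    (j = q →
      (∑ p ∈ Finset.range (q - j + 1),
        (-1 : ℚ) ^ p * (2 * q - p).factorial /
          (p.factorial * (q - p + j + 1).factorial * (q - p - j).factorial)) =
        1 / (2 * q + 1)) := by
  rcases hjq.lt_or_eq with hlt | rfl
  · have hrf : risingFactorial ((j : ℚ) - q + 1) (q - j) = 0 := by
      apply Finset.prod_eq_zero (Finset.mem_range.mpr (show q - j - 1 < q - j by omega))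
      rw [show q - j - 1 = q - (j+1) from by omega,
        Nat.cast_sub (show j + 1 ≤ q by omega)]
      push_cast
      ring
    refine ⟨?_, fun _ => H1_key q j hlt, fun h => absurd h (by omega)⟩
    rw [H1_key q j hlt, hrf, zero_div, mul_zero]
  · have hterm : (∑ p ∈ Finset.range (j - j + 1),
        (-1 : ℚ) ^ p * (2 * j - p).factorial /
          (p.factorial * (j - p + j + 1).factorial * (j - p - j).factorial)) =
        ((2*j).factorial : ℚ) / ((2*j+1).factorial : ℚ) := by
      rw [show j - j + 1 = 1 from by omega, Finset.sum_range_one]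
      norm_num
      rw [show j + j + 1 = 2*j + 1 from by omega]
    have hfac : ((2*j).factorial : ℚ) / ((2*j+1).factorial : ℚ) = 1 / (2*j+1) := by
      rw [show (2*j+1).factorial = (2*j+1) * (2*j).factorial from Nat.factorial_succ _]
      have h1 : ((2*j).factorial : ℚ) ≠ 0 := Nat.cast_ne_zero.mpr (Nat.factorial_ne_zero _)
      have h2 : ((2*j:ℕ):ℚ) + 1 ≠ 0 := by positivity
      push_cast
      field_simp
    refine ⟨?_, fun h => absurd h (by omega), fun _ => by rw [hterm, hfac]⟩
    rw [hterm]
    simp [risingFactorial, show j - j = 0 from by omega]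
    rw [show j + j + 1 = 2*j + 1 from by omega]
end

section
/- For nonnegative integers q and j with j ≤ q, the alternating sum H₂(q,j) = Σ_{p=0}^{q-j} (-1)^p (2q-p+1)! / (p! · (q-p+j+2)! · (q-p-j)!) vanishes for 0 ≤ j < q and equals 1/(2q+2) when j = q. -/
/-!
Put n = q - j. For j < q each term equals (-1)^p C(n, p) C(2q + 1 - p, n - 1) / n, so the sum
is, up to the factor 1/n and reflection p ↦ n - p, the n-th forward difference of x ↦ C(x, n - 1)
at q + j + 1; this vanishes because C(x, n - 1) is a polynomial of degree n - 1 < n in x.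
For j = q only the term p = 0 survives.
-/
open Finset Nat
open scoped fwdDiff

theorem fwdDiff_iter_choose_eq_zero_of_lt {r n : ℕ} (h : r < n) :
    (Δ_[1])^[n] (fun x ↦ x.choose r : ℕ → ℤ) = 0 := by
  obtain ⟨k, rfl⟩ := Nat.exists_eq_add_of_lt h
  have hr := fwdDiff_iter_choose 0 r
  simp only [add_zero, choose_zero_right, cast_one] at hr
  rw [show r + k + 1 = (k + 1) + r by omega, Function.iterate_add_apply, hr,
    Function.iterate_succ_apply, fwdDiff_const]
  exact Function.iterate_fixed (fwdDiff_const 1 0) k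

theorem alternating_sum_choose_mul_choose_sub_eq_zero {m n r : ℕ} (hrn : r < n) (hnm : n ≤ m) :
    ∑ p ∈ range (n + 1), (-1 : ℤ) ^ p * n.choose p * (m - p).choose r = 0 := by
  have h := congr_fun (fwdDiff_iter_choose_eq_zero_of_lt hrn) (m - n)
  rw [fwdDiff_iter_eq_sum_shift, ← sum_range_reflect, Pi.zero_apply] at h
  rw [← h]
  refine sum_congr rfl fun p hp ↦ ?_
  have hpn : p ≤ n := Nat.lt_succ_iff.mp (mem_range.mp hp)
  rw [add_tsub_cancel_right, choose_symm hpn, smul_eq_mul, smul_eq_mul, mul_one,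
    show m - n + (n - p) = m - p by omega, show n - (n - p) = p by omega]

theorem factorial_div_eq_choose_mul_choose_div {p u w k : ℕ} (h : p + u = k + 1) :
    ((w + k)! : ℚ) / (p ! * w ! * u !) = (k + 1).choose p * (w + k).choose k / (k + 1) := by
  obtain rfl : u = k + 1 - p := by omega
  rw [cast_choose ℚ (by omega : p ≤ k + 1), add_comm w k, cast_add_choose]
  push_cast [factorial_succ]
  field_simp

theorem H2_chu_vandermonde_general (q j : ℕ) :
    (j < q →
      (∑ p ∈ Finset.range (q - j + 1),
        (-1 : ℚ) ^ p * (2 * q - p + 1).factorial /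
          (p.factorial * (q - p + j + 2).factorial * (q - p - j).factorial)) = 0) ∧
    (j = q →
      (∑ p ∈ Finset.range (q - j + 1),
        (-1 : ℚ) ^ p * (2 * q - p + 1).factorial /
          (p.factorial * (q - p + j + 2).factorial * (q - p - j).factorial)) =
        1 / (2 * q + 2)) := by
  refine ⟨fun hlt ↦ ?_, fun heq ↦ ?_⟩
  · obtain ⟨k, hk⟩ : ∃ k, q - j = k + 1 := ⟨q - j - 1, by omega⟩
    have hterm : ∀ p ∈ range (k + 1 + 1),
        (-1 : ℚ) ^ p * (2 * q - p + 1)! / (p ! * (q - p + j + 2)! * (q - p - j)!) =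
          ((-1 : ℤ) ^ p * (k + 1).choose p * (2 * q + 1 - p).choose k : ℤ) / (k + 1) := by
      intro p hp
      have hpk : p ≤ k + 1 := Nat.lt_succ_iff.mp (mem_range.mp hp)
      rw [mul_div_assoc, show 2 * q - p + 1 = (q - p + j + 2) + k by omega,
        factorial_div_eq_choose_mul_choose_div (show p + (q - p - j) = k + 1 by omega),
        show q - p + j + 2 + k = 2 * q + 1 - p by omega]
      push_cast
      ring
    rw [hk, sum_congr rfl hterm, ← sum_div, ← Int.cast_sum,
      alternating_sum_choose_mul_choose_sub_eq_zero (lt_add_one k) (by omega), Int.cast_zero,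
      zero_div]
  · subst heq
    rw [Nat.sub_self, sum_range_one, show 2 * j - 0 + 1 = 2 * j + 1 by omega,
      show j - 0 + j + 2 = 2 * j + 1 + 1 by omega, show j - 0 - j = 0 by omega,
      factorial_zero, factorial_succ (2 * j + 1)]
    push_cast
    field_simp
    ring

theorem H2_chu_vandermonde (q j : ℕ) (hjq : j ≤ q) :
    (j < q →
      (∑ p ∈ Finset.range (q - j + 1),
        (-1 : ℚ) ^ p * (2 * q - p + 1).factorial /
          (p.factorial * (q - p + j + 2).factorial * (q - p - j).factorial)) = 0) ∧
    (j = q →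
      (∑ p ∈ Finset.range (q - j + 1),
        (-1 : ℚ) ^ p * (2 * q - p + 1).factorial /
          (p.factorial * (q - p + j + 2).factorial * (q - p - j).factorial)) =
        1 / (2 * q + 2)) :=
  H2_chu_vandermonde_general q j
end
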